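/- Sequential nearest-neighbour clustering is perfect-detecting: suppose (X,d) is a finite metric space with a perfect k-clustering C. Then for any ordering of the points, the incremental procedure that maintains k centers, initialized to the first k points, and upon each new point adds it to the center set and then merges the two closest centers (replacing them by either one), ends with exactly one center in each cluster of C, and these centers induce C. -/

import Mathlib

/-!
Among any `k + 1` points some two share a cluster, and by perfectness every within-cluster
distance is smaller than every between-cluster distance; so the closest pair of the `k + 1`
centers formed at each step lies in a single cluster, and merging it loses no cluster. Hence
the `k` centers always meet exactly the clusters of the points seen so far. At the end they meet
all `k` clusters, one each, and a point's nearest center must be the one in its own cluster.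
-/

open Finset
open scoped Classical

def IsPerfectClustering {X ι : Type*} [PseudoMetricSpace X] (c : X → ι) : Prop :=
  ∀ x y w z : X, c x = c y → c w ≠ c z → dist x y < dist w z

theorem Finset.image_erase_of_map_eq {α β : Type*} [DecidableEq α] [DecidableEq β]
    {f : α → β} {s : Finset α} {a b : α} (ha : a ∈ s) (hb : b ∈ s) (hab : a ≠ b)
    (hf : f a = f b) : (s.erase a).image f = s.image f := by
  conv_rhs => rw [← insert_erase ha, image_insert, hf]
  exact (insert_eq_of_mem (mem_image_of_mem f (mem_erase.2 ⟨hab.symm, hb⟩))).symm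

theorem Finset.existsUnique_of_image_eq_univ {α β : Type*} [Fintype β] [DecidableEq β]
    {f : α → β} {s : Finset α} (hcard : s.card = Fintype.card β) (himg : s.image f = univ)
    (b : β) : ∃! a, a ∈ s ∧ f a = b := by
  have hinj : Set.InjOn f s := injOn_of_card_image_eq (by rw [himg, hcard, card_univ])
  obtain ⟨a, ha, rfl⟩ := mem_image.1 (himg ▸ mem_univ b)
  exact ⟨a, ⟨ha, rfl⟩, fun a' ⟨ha', he⟩ => hinj ha' ha he⟩

namespace IsPerfectClustering

variable {X ι : Type*} [PseudoMetricSpace X] {c : X → ι}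

theorem map_eq_of_dist_le (h : IsPerfectClustering c) {p s t : X} (hs : c s = c p)
    (hst : dist p t ≤ dist p s) : c t = c p := by
  by_contra hne
  exact (h p s p t hs.symm fun h' => hne h'.symm).not_ge hst

theorem map_eq_of_closest_pair [Fintype ι] (h : IsPerfectClustering c) {S : Finset X}
    (hS : Fintype.card ι < S.card) {t t' : X}
    (hmin : ∀ s ∈ S, ∀ s' ∈ S, s ≠ s' → dist t t' ≤ dist s s') : c t = c t' := by
  obtain ⟨a, ha, b, hb, hab, hcab⟩ :=
    exists_ne_map_eq_of_card_lt_of_maps_to (t := univ) (by simpa using hS)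
      fun a _ => mem_univ (c a)
  by_contra hne
  exact (h a b t t' hcab hne).not_ge (hmin a ha b hb hab)

theorem merge_closest_pair [Fintype ι] [DecidableEq X] [DecidableEq ι]
    (h : IsPerfectClustering c) {S T : Finset X} (hS : Fintype.card ι < S.card) {t t' : X}
    (ht : t ∈ S) (ht' : t' ∈ S) (htt' : t ≠ t')
    (hmin : ∀ s ∈ S, ∀ s' ∈ S, s ≠ s' → dist t t' ≤ dist s s')
    (hT : T = S.erase t ∨ T = S.erase t') :
    T.card + 1 = S.card ∧ T ⊆ S ∧ T.image c = S.image c := by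
  have hctt' := h.map_eq_of_closest_pair hS hmin
  rcases hT with rfl | rfl
  · exact ⟨card_erase_add_one ht, erase_subset _ _, image_erase_of_map_eq ht ht' htt' hctt'⟩
  · exact ⟨card_erase_add_one ht', erase_subset _ _,
      image_erase_of_map_eq ht' ht htt'.symm hctt'.symm⟩

end IsPerfectClustering

theorem IsPerfectClustering.sequential_centers_invariant {X : Type*} [PseudoMetricSpace X]
    {k : ℕ} {c : X → Fin k} (hperf : IsPerfectClustering c) {n : ℕ} {x : ℕ → X}
    (hinj : ∀ m m', m < n → m' < n → x m = x m' → m = m') {T : ℕ → Finset X}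
    (hTinit : T k = (range k).image x)
    (hstep : ∀ m : ℕ, k ≤ m → m < n →
      ∃ t t' : X, t ∈ insert (x m) (T m) ∧ t' ∈ insert (x m) (T m) ∧ t ≠ t' ∧
        (∀ s ∈ insert (x m) (T m), ∀ s' ∈ insert (x m) (T m), s ≠ s' →
          dist t t' ≤ dist s s') ∧
        (T (m + 1) = (insert (x m) (T m)).erase t ∨
         T (m + 1) = (insert (x m) (T m)).erase t'))
    {m : ℕ} (hkm : k ≤ m) (hmn : m ≤ n) :
    (T m).card = k ∧ T m ⊆ (range m).image x ∧
      (T m).image c = ((range m).image x).image c := by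
  induction m, hkm using Nat.le_induction with
  | base =>
    have hinjOn : Set.InjOn x (range k) := fun a ha b hb hab =>
      hinj a b (by have := mem_range.1 ha; omega) (by have := mem_range.1 hb; omega) hab
    rw [hTinit]
    exact ⟨by rw [card_image_of_injOn hinjOn, card_range], subset_rfl, rfl⟩
  | succ m hkm ih =>
    obtain ⟨hcard, hsub, himg⟩ := ih (by omega)
    obtain ⟨t, t', ht, ht', htt', hmin, hT⟩ := hstep m hkm (by omega)
    have hxm : x m ∉ T m := fun hm => by
      obtain ⟨j, hj, hjm⟩ := mem_image.1 (hsub hm)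
      have hjm_lt : j < m := mem_range.1 hj
      exact hjm_lt.ne (hinj j m (by omega) (by omega) hjm)
    have hS : Fintype.card (Fin k) < (insert (x m) (T m)).card := by
      rw [card_insert_of_notMem hxm, hcard, Fintype.card_fin]; omega
    obtain ⟨hcard', hsub', himg'⟩ := hperf.merge_closest_pair hS ht ht' htt' hmin hT
    rw [range_add_one, image_insert]
    refine ⟨by rw [card_insert_of_notMem hxm] at hcard'; omega,
      hsub'.trans (insert_subset_insert _ hsub), ?_⟩
    rw [himg', image_insert, image_insert, himg]

theorem sequential_nearest_neighbour_perfect_detecting_general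
    {X : Type*} [MetricSpace X]
    (k : ℕ) (c : X → Fin k) (hsurj : Function.Surjective c)
    (hperf : ∀ x y w z : X, c x = c y → c w ≠ c z → dist x y < dist w z)
    (n : ℕ) (hkn : k ≤ n)
    (x : ℕ → X) (henum : ∀ p : X, ∃ m < n, x m = p)
    (hinj : ∀ m m', m < n → m' < n → x m = x m' → m = m')
    (T : ℕ → Finset X)
    (hTinit : T k = (Finset.range k).image x)
    (hstep : ∀ m : ℕ, k ≤ m → m < n →
      ∃ t t' : X, t ∈ insert (x m) (T m) ∧ t' ∈ insert (x m) (T m) ∧ t ≠ t' ∧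
        (∀ s ∈ insert (x m) (T m), ∀ s' ∈ insert (x m) (T m), s ≠ s' →
          dist t t' ≤ dist s s') ∧
        (T (m + 1) = (insert (x m) (T m)).erase t ∨
         T (m + 1) = (insert (x m) (T m)).erase t')) :
    (∀ i : Fin k, ∃! t : X, t ∈ T n ∧ c t = i) ∧
    ∀ p t : X, t ∈ T n → (∀ s ∈ T n, dist p t ≤ dist p s) → c t = c p := by
  have hperf' : IsPerfectClustering c := hperf
  obtain ⟨hcard, -, himg⟩ := hperf'.sequential_centers_invariant hinj hTinit hstep hkn le_rfl
  have hcover : (T n).image c = univ := by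
    refine himg.trans (eq_univ_of_forall fun i => ?_)
    obtain ⟨p, rfl⟩ := hsurj i
    obtain ⟨m, hm, rfl⟩ := henum p
    exact mem_image_of_mem c (mem_image_of_mem x (mem_range.2 hm))
  refine ⟨existsUnique_of_image_eq_univ (by simpa using hcard) hcover, fun p t _ hnear => ?_⟩
  obtain ⟨s, hs, hcs⟩ := mem_image.1 (hcover ▸ mem_univ (c p))
  exact hperf'.map_eq_of_dist_le hcs (hnear s hs)

/-- sequential nearest-neighbour clustering is perfect-detecting.  Let
`(X,d)` be a finite metric space with a perfect `k`-clustering `c`, and let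
`x 0, …, x (n-1)` be any ordering of its `n` points.  The procedure keeps `k` centers:
`T k` consists of the first `k` points, and for each later point the procedure adds it
to the center set and replaces the closest pair of centers by either of its members.
Then the final center set `T n` has exactly one center in each cluster, and these
centers induce `c` (each point's nearest center lies in its own cluster). -/
theorem sequential_nearest_neighbour_perfect_detecting
    {X : Type*} [MetricSpace X] [Fintype X]
    (k : ℕ) (hk : 0 < k) (c : X → Fin k) (hsurj : Function.Surjective c)
    (hperf : ∀ x y w z : X, c x = c y → c w ≠ c z → dist x y < dist w z)
    (n : ℕ) (hn : n = Fintype.card X) (hkn : k ≤ n)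
    (x : ℕ → X) (henum : ∀ p : X, ∃ m < n, x m = p)
    (hinj : ∀ m m', m < n → m' < n → x m = x m' → m = m')
    (T : ℕ → Finset X)
    (hTinit : T k = (Finset.range k).image x)
    (hstep : ∀ m : ℕ, k ≤ m → m < n →
      ∃ t t' : X, t ∈ insert (x m) (T m) ∧ t' ∈ insert (x m) (T m) ∧ t ≠ t' ∧
        (∀ s ∈ insert (x m) (T m), ∀ s' ∈ insert (x m) (T m), s ≠ s' →
          dist t t' ≤ dist s s') ∧
        (T (m + 1) = (insert (x m) (T m)).erase t ∨
         T (m + 1) = (insert (x m) (T m)).erase t')) :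
    (∀ i : Fin k, ∃! t : X, t ∈ T n ∧ c t = i) ∧
    ∀ p t : X, t ∈ T n → (∀ s ∈ T n, dist p t ≤ dist p s) → c t = c p :=
  sequential_nearest_neighbour_perfect_detecting_general k c hsurj hperf n hkn x henum hinj T hTinit
    hstep
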